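/- arXiv:2506.19562 — 5 statements merged into one kernel-verified Lean document; each statement's English description precedes it below -/
import Mathlib

section
/- Let f : ℍ → ℍ be a hyperbolic holomorphic self-map of the right half-plane with Denjoy–Wolff point ∞. Then for any z, w ∈ ℍ the sequence {d_ℍ(w, f^n(z))} is eventually strictly increasing: there exists N such that d_ℍ(w, f^n(z)) < d_ℍ(w, f^{n+1}(z)) for all n ≥ N. -/
open Complex Filter Topology

/-- Pseudo-hyperbolic distance on the right half-plane ℍ = {Re z > 0}. -/
noncomputable def rhoH (z w : ℂ) : ℝ := ‖(z - w) / (z + (starRingEnd ℂ) w)‖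

/-- Hyperbolic distance on the right half-plane. -/
noncomputable def dH (z w : ℂ) : ℝ := (1/2) * Real.log ((1 + rhoH z w) / (1 - rhoH z w))

/-- `p` is a hyperbolic projection of `z` onto the curve `γ : [0,∞) → ℍ`. -/
def IsProjH (γ : ℝ → ℂ) (z p : ℂ) : Prop :=
  (∃ t ≥ (0:ℝ), p = γ t) ∧ ∀ t ≥ (0:ℝ), dH z p ≤ dH z (γ t)

/-- `f` is a hyperbolic holomorphic self-map of the right half-plane with
Denjoy–Wolff point ∞: it preserves ℍ, is holomorphic on ℍ, its iterates tend to ∞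
uniformly on compact subsets of ℍ, and `f(z)/z → c` for some `c > 1` as `z → ∞`
within every sector `{|arg z| < φ}`, `φ ∈ (0, π/2)`. -/
def HyperbolicAtInf (f : ℂ → ℂ) : Prop :=
  (∀ z : ℂ, 0 < z.re → 0 < (f z).re) ∧
  DifferentiableOn ℂ f {z : ℂ | 0 < z.re} ∧
  (∀ K : Set ℂ, K ⊆ {z : ℂ | 0 < z.re} → IsCompact K →
    ∀ M : ℝ, ∃ N : ℕ, ∀ n ≥ N, ∀ z ∈ K, M < ‖f^[n] z‖) ∧
  (∃ c : ℝ, 1 < c ∧ ∀ φ ∈ Set.Ioo (0:ℝ) (Real.pi/2), ∀ ε > (0:ℝ), ∃ R : ℝ,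
    ∀ z : ℂ, 0 < z.re → |z.arg| < φ → R < ‖z‖ →
      ‖f z / z - (c:ℂ)‖ < ε)

/-!
Schwarz–Pick makes the pseudo-hyperbolic step `ρ(f^[n+1] z, f^[n] z)` nonincreasing, and Julia's
lemma gives `Re f u ≥ c · Re u`; together they keep the orbit `uₙ = f^[n] z` in a sector
`|arg| < φ < π/2`, where `uₙ₊₁ / uₙ → c`. Since
`d(w, u) = log (|u + w̄| + |u - w|) - ½ log (4 Re w Re u)`, the increments `d(w, uₙ₊₁) - d(w, uₙ)`
tend to `log c - ½ log c > 0`.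
-/

open Metric Set ComplexConjugate

lemma normSq_add_conj_sub_normSq_sub (a b : ℂ) :
    normSq (a + conj b) - normSq (a - b) = 4 * a.re * b.re := by
  simp only [normSq_apply, add_re, add_im, sub_re, sub_im, conj_re, conj_im]
  ring

lemma add_conj_ne_zero {a b : ℂ} (ha : 0 < a.re) (hb : 0 < b.re) : a + conj b ≠ 0 := by
  intro h
  have := congrArg re h
  simp only [add_re, conj_re, zero_re] at this
  linarith

lemma norm_add_conj_comm (a b : ℂ) : ‖a + conj b‖ = ‖b + conj a‖ := by
  rw [← norm_conj, map_add, conj_conj, add_comm]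

lemma norm_sub_lt_norm_add_conj {a b : ℂ} (ha : 0 < a.re) (hb : 0 < b.re) :
    ‖a - b‖ < ‖a + conj b‖ := by
  have h := normSq_add_conj_sub_normSq_sub a b
  rw [← Complex.sq_norm, ← Complex.sq_norm] at h
  exact lt_of_pow_lt_pow_left₀ 2 (norm_nonneg _) (by nlinarith [mul_pos ha hb])

lemma rhoH_eq_div (a b : ℂ) : rhoH a b = ‖a - b‖ / ‖a + conj b‖ := norm_div _ _

lemma rhoH_nonneg (a b : ℂ) : 0 ≤ rhoH a b := norm_nonneg _

lemma rhoH_lt_one {a b : ℂ} (ha : 0 < a.re) (hb : 0 < b.re) : rhoH a b < 1 := by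
  rw [rhoH_eq_div, div_lt_one (norm_pos_iff.2 (add_conj_ne_zero ha hb))]
  exact norm_sub_lt_norm_add_conj ha hb

lemma one_sub_rhoH_sq {a b : ℂ} (ha : 0 < a.re) (hb : 0 < b.re) :
    1 - rhoH a b ^ 2 = 4 * a.re * b.re / normSq (a + conj b) := by
  have hne : normSq (a + conj b) ≠ 0 := normSq_eq_zero.not.2 (add_conj_ne_zero ha hb)
  rw [rhoH, Complex.sq_norm, normSq_div, ← normSq_add_conj_sub_normSq_sub]
  field_simp

lemma dH_eq_log_sub_log {w u : ℂ} (hw : 0 < w.re) (hu : 0 < u.re) :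
    dH w u = Real.log (‖u + conj w‖ + ‖u - w‖) - Real.log (4 * w.re * u.re) / 2 := by
  have hBA : ‖u - w‖ < ‖u + conj w‖ := norm_sub_lt_norm_add_conj hu hw
  have hAB : ‖u + conj w‖ ^ 2 - ‖u - w‖ ^ 2 = 4 * w.re * u.re := by
    rw [Complex.sq_norm, Complex.sq_norm, normSq_add_conj_sub_normSq_sub]; ring
  rw [dH, rhoH_eq_div, norm_add_conj_comm, norm_sub_rev, ← hAB]
  set A := ‖u + conj w‖
  set B := ‖u - w‖
  have hB : 0 ≤ B := norm_nonneg _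
  have hratio : (1 + B / A) / (1 - B / A) = (A + B) ^ 2 / (A ^ 2 - B ^ 2) := by
    have hA : A ≠ 0 := by linarith
    have hA_sub_B : A - B ≠ 0 := by linarith
    rw [show A ^ 2 - B ^ 2 = (A - B) * (A + B) by ring]
    field_simp
  rw [hratio, Real.log_div (by nlinarith) (by nlinarith), Real.log_pow]
  push_cast
  ring

lemma re_cayley_pos {a ζ : ℂ} (ha : 0 < a.re) (hζ : ‖ζ‖ < 1) :
    0 < ((a + conj a * ζ) / (1 - ζ)).re := by
  have hζ1 : normSq ζ < 1 := by rw [← Complex.sq_norm]; nlinarith [norm_nonneg ζ]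
  have hne : 1 - ζ ≠ 0 := by
    rw [sub_ne_zero]
    rintro rfl
    simp at hζ
  have hden := normSq_pos.2 hne
  have hre : ((a + conj a * ζ) / (1 - ζ)).re = a.re * (1 - normSq ζ) / normSq (1 - ζ) := by
    simp only [div_re, add_re, add_im, mul_re, mul_im, sub_re, sub_im, one_re, one_im,
      conj_re, conj_im, normSq_apply]
    field_simp
    ring
  rw [hre]
  exact div_pos (mul_pos ha (by linarith)) hden

lemma cayley_apply_div_add_conj {a b : ℂ} (ha : 0 < a.re) (hb : 0 < b.re) :
    (b + conj b * ((a - b) / (a + conj b))) / (1 - (a - b) / (a + conj b)) = a := by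
  have h₁ := add_conj_ne_zero ha hb
  have h₂ := add_conj_ne_zero hb hb
  have hden : 1 - (a - b) / (a + conj b) = (b + conj b) / (a + conj b) := by
    field_simp
    ring
  rw [hden]
  field_simp
  ring

/-- Schwarz–Pick lemma for the right half-plane: conjugating by the Cayley maps
`ζ ↦ (b + b̄ζ)/(1 - ζ)` and `v ↦ (v - f b)/(v + conj (f b))` reduces it to Schwarz's lemma. -/
theorem rhoH_le_rhoH_of_mapsTo {f : ℂ → ℂ} (hmaps : ∀ z : ℂ, 0 < z.re → 0 < (f z).re)
    (hf : DifferentiableOn ℂ f {z : ℂ | 0 < z.re}) {a b : ℂ} (ha : 0 < a.re) (hb : 0 < b.re) :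
    rhoH (f a) (f b) ≤ rhoH a b := by
  unfold rhoH
  set S : ℂ → ℂ := fun ζ => (b + conj b * ζ) / (1 - ζ)
  set g : ℂ → ℂ := fun ζ => (f (S ζ) - f b) / (f (S ζ) + conj (f b))
  have hS : MapsTo S (ball 0 1) {z : ℂ | 0 < z.re} := fun ζ hζ =>
    re_cayley_pos hb (mem_ball_zero_iff.1 hζ)
  have hSdiff : DifferentiableOn ℂ S (ball 0 1) := by
    refine (by fun_prop : Differentiable ℂ fun ζ : ℂ => b + conj b * ζ).differentiableOn.div
      (by fun_prop) fun ζ hζ h => ?_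
    rw [sub_eq_zero] at h
    simp [← h] at hζ
  have hfS : DifferentiableOn ℂ (f ∘ S) (ball 0 1) := hf.comp hSdiff hS
  have hgdiff : DifferentiableOn ℂ g (ball 0 1) :=
    (hfS.sub_const _).div (hfS.add_const _) fun ζ hζ =>
      add_conj_ne_zero (hmaps _ (hS hζ)) (hmaps b hb)
  have hgmaps : MapsTo g (ball 0 1) (closedBall 0 1) := fun ζ hζ =>
    mem_closedBall_zero_iff.2 (rhoH_lt_one (hmaps _ (hS hζ)) (hmaps b hb)).le
  have hg0 : g 0 = 0 := by simp [g, S]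
  have hζ₀ : ‖(a - b) / (a + conj b)‖ < 1 := rhoH_lt_one ha hb
  have hSζ₀ : S ((a - b) / (a + conj b)) = a := cayley_apply_div_add_conj ha hb
  simpa only [g, hSζ₀] using Complex.norm_le_norm_of_mapsTo_ball hgdiff hgmaps hg0 hζ₀

def HasAngularDerivAtInf (f : ℂ → ℂ) (c : ℝ) : Prop :=
  ∀ φ ∈ Set.Ioo (0:ℝ) (Real.pi/2), ∀ ε > (0:ℝ), ∃ R : ℝ,
    ∀ z : ℂ, 0 < z.re → |z.arg| < φ → R < ‖z‖ → ‖f z / z - (c:ℂ)‖ < ε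

lemma exists_abs_arg_lt_of_norm_le_mul_re {C : ℝ} (hC : 0 < C) :
    ∃ φ ∈ Ioo 0 (Real.pi / 2), ∀ z : ℂ, 0 < z.re → ‖z‖ ≤ C * z.re → |z.arg| < φ := by
  have hpos : 0 < 1 / (C + 1) := by positivity
  have hlt : 1 / (C + 1) < 1 := by rw [div_lt_one (by linarith)]; linarith
  refine ⟨Real.arccos (1 / (C + 1)), ⟨Real.arccos_pos.2 hlt, Real.arccos_lt_pi_div_two.2 hpos⟩,
    fun z hz hzC => ?_⟩
  have hz0 : z ≠ 0 := by rintro rfl; simp at hz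
  have hnorm : 0 < ‖z‖ := norm_pos_iff.2 hz0
  rw [← Real.arccos_cos (abs_nonneg _) (abs_arg_le_pi z), Real.cos_abs, cos_arg hz0]
  refine Real.arccos_lt_arccos (by linarith) ?_ (div_le_one hnorm |>.2 (re_le_norm z))
  rw [div_lt_div_iff₀ (by linarith) hnorm]
  nlinarith

lemma HasAngularDerivAtInf.tendsto_div {f : ℂ → ℂ} {c : ℝ} (hf : HasAngularDerivAtInf f c)
    {α : Type*} {l : Filter α} {u : α → ℂ} {C : ℝ} (hC : 0 < C)
    (hu : ∀ᶠ x in l, 0 < (u x).re ∧ ‖u x‖ ≤ C * (u x).re)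
    (hnorm : Tendsto (fun x => ‖u x‖) l atTop) :
    Tendsto (fun x => f (u x) / u x) l (𝓝 c) := by
  obtain ⟨φ, hφ, harg⟩ := exists_abs_arg_lt_of_norm_le_mul_re hC
  refine Metric.tendsto_nhds.2 fun ε hε => ?_
  obtain ⟨R, hR⟩ := hf φ hφ ε hε
  filter_upwards [hu, hnorm.eventually_gt_atTop R] with x ⟨hre, hsector⟩ hRx
  exact dist_eq _ _ ▸ hR _ hre (harg _ hre hsector) hRx

lemma mul_one_sub_rhoH_sq {a b : ℂ} {x : ℝ} (ha : 0 < a.re) (hb : 0 < b.re) (hx : 0 < x) :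
    x * (1 - rhoH a b ^ 2) = 4 * a.re * (b / x).re / normSq (a / x + conj (b / x)) := by
  have hne : normSq (a + conj b) ≠ 0 := normSq_eq_zero.not.2 (add_conj_ne_zero ha hb)
  have hx0 : x ≠ 0 := hx.ne'
  rw [one_sub_rhoH_sq ha hb, map_div₀, conj_ofReal, ← add_div, normSq_div, normSq_ofReal,
    div_ofReal_re]
  field_simp

lemma tendsto_re_div_normSq_div_add_conj (a : ℂ) {q : ℝ → ℂ} {c : ℝ} (hc : c ≠ 0)
    (hq : Tendsto q atTop (𝓝 c)) :
    Tendsto (fun x : ℝ => 4 * a.re * (q x).re / normSq (a / x + conj (q x))) atTop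
      (𝓝 (4 * a.re / c)) := by
  have ha : Tendsto (fun x : ℝ => a / x) atTop (𝓝 0) := by
    simpa [div_eq_mul_inv, Function.comp_def] using
      ((continuous_ofReal.tendsto 0).comp tendsto_inv_atTop_zero).const_mul a
  have := (((continuous_re.tendsto _).comp hq).const_mul (4 * a.re)).div
    ((continuous_normSq.tendsto _).comp (ha.add ((continuous_conj.tendsto _).comp hq)))
    (by simpa using hc)
  convert this using 2
  · rfl
  · simp only [ofReal_re, zero_add, conj_ofReal, normSq_ofReal]
    field_simp

/-- Julia's lemma at `∞`: let `x → +∞` in Schwarz–Pick at `u` and `x`, written as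
`x (1 - ρ(u, x)²) ≤ x (1 - ρ(f u, f x)²)`. -/
theorem le_re_of_hasAngularDerivAtInf {f : ℂ → ℂ} {c : ℝ}
    (hmaps : ∀ z : ℂ, 0 < z.re → 0 < (f z).re) (hf : DifferentiableOn ℂ f {z : ℂ | 0 < z.re})
    (hang : HasAngularDerivAtInf f c) (hc : 0 < c) {u : ℂ} (hu : 0 < u.re) :
    c * u.re ≤ (f u).re := by
  have hlim : Tendsto (fun x : ℝ => f x / x) atTop (𝓝 c) := by
    refine hang.tendsto_div one_pos ?_ ?_
    · filter_upwards [eventually_gt_atTop 0] with x hx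
      simp [abs_of_pos hx, hx]
    · simpa using tendsto_abs_atTop_atTop
  have hone : Tendsto (fun x : ℝ => (x : ℂ) / x) atTop (𝓝 (1 : ℝ)) := by
    refine tendsto_const_nhds.congr' ?_
    filter_upwards [eventually_gt_atTop 0] with x hx
    rw [div_self (ofReal_ne_zero.2 hx.ne'), ofReal_one]
  have hpick : ∀ᶠ x : ℝ in atTop,
      4 * u.re * ((x : ℂ) / x).re / normSq (u / x + conj ((x : ℂ) / x)) ≤
        4 * (f u).re * (f x / x).re / normSq (f u / x + conj (f x / x)) := by
    filter_upwards [eventually_gt_atTop 0] with x hx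
    have hxre : 0 < (x : ℂ).re := by simpa using hx
    have hsq := pow_le_pow_left₀ (rhoH_nonneg _ _) (rhoH_le_rhoH_of_mapsTo hmaps hf hu hxre) 2
    rw [← mul_one_sub_rhoH_sq hu hxre hx, ← mul_one_sub_rhoH_sq (hmaps u hu) (hmaps x hxre) hx]
    exact mul_le_mul_of_nonneg_left (by linarith) hx.le
  have hle := le_of_tendsto_of_tendsto (tendsto_re_div_normSq_div_add_conj u one_ne_zero hone)
    (tendsto_re_div_normSq_div_add_conj (f u) hc.ne' hlim) hpick
  rw [div_one, le_div_iff₀ hc] at hle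
  linarith

lemma norm_sub_le_of_rhoH_le {a b : ℂ} {r : ℝ} (ha : 0 < a.re) (hb : 0 < b.re) (hr : r < 1)
    (h : rhoH a b ≤ r) : ‖a - b‖ ≤ 2 * r / (1 - r) * b.re := by
  have hr0 : 0 ≤ r := (rhoH_nonneg a b).trans h
  have hden : 0 < ‖a + conj b‖ := norm_pos_iff.2 (add_conj_ne_zero ha hb)
  have htri : ‖a + conj b‖ ≤ ‖a - b‖ + 2 * b.re := by
    calc ‖a + conj b‖ = ‖(a - b) + (b + conj b)‖ := by ring_nf
      _ ≤ ‖a - b‖ + ‖b + conj b‖ := norm_add_le _ _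
      _ = ‖a - b‖ + 2 * b.re := by
        rw [add_conj, norm_real, Real.norm_of_nonneg (by linarith)]
  rw [rhoH_eq_div, div_le_iff₀ hden] at h
  rw [div_mul_eq_mul_div, le_div_iff₀ (by linarith)]
  nlinarith

lemma exists_norm_le_mul_re_of_step_le {u : ℕ → ℂ} {c M : ℝ} (hc : 1 < c) (hM : 0 ≤ M)
    (hu0 : 0 < (u 0).re) (hre : ∀ n, c * (u n).re ≤ (u (n + 1)).re)
    (hstep : ∀ n, ‖u (n + 1) - u n‖ ≤ M * (u n).re) :
    ∃ C > 0, ∀ n, ‖u n‖ ≤ C * (u n).re := by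
  have hK : 0 ≤ M / (c - 1) := div_nonneg hM (by linarith)
  have hmono : ∀ n, (u 0).re ≤ (u n).re := by
    intro n
    induction n with
    | zero => rfl
    | succ n ih => nlinarith [hre n]
  have hnorm : ∀ n, ‖u n‖ ≤ ‖u 0‖ + M / (c - 1) * (u n).re := by
    intro n
    induction n with
    | zero => nlinarith [hmono 0]
    | succ n ih =>
      have hgeom : M / (c - 1) * (u n).re + M * (u n).re = M / (c - 1) * (c * (u n).re) := by
        field_simp [(by linarith : c - 1 ≠ 0)]
        ring
      calc ‖u (n + 1)‖ ≤ ‖u n‖ + ‖u (n + 1) - u n‖ := norm_le_norm_add_norm_sub' _ _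
        _ ≤ ‖u 0‖ + M / (c - 1) * (c * (u n).re) := by linarith [hstep n]
        _ ≤ ‖u 0‖ + M / (c - 1) * (u (n + 1)).re := by gcongr; exact hre n
  have hu0' : 0 < ‖u 0‖ := hu0.trans_le (re_le_norm _)
  refine ⟨‖u 0‖ / (u 0).re + M / (c - 1), by positivity, fun n => ?_⟩
  have hz : ‖u 0‖ ≤ ‖u 0‖ / (u 0).re * (u n).re := by
    rw [div_mul_eq_mul_div, le_div_iff₀ hu0]
    exact mul_le_mul_of_nonneg_left (hmono n) (norm_nonneg _)
  linarith [hnorm n]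

lemma tendsto_re_div_re {α : Type*} {l : Filter α} {a b : α → ℂ} {c C : ℝ}
    (hb : ∀ᶠ x in l, 0 < (b x).re ∧ ‖b x‖ ≤ C * (b x).re)
    (h : Tendsto (fun x => a x / b x) l (𝓝 c)) :
    Tendsto (fun x => (a x).re / (b x).re) l (𝓝 c) := by
  rw [tendsto_iff_norm_sub_tendsto_zero] at h ⊢
  refine squeeze_zero' (Eventually.of_forall fun _ => norm_nonneg _) ?_
    (by simpa using h.const_mul C)
  filter_upwards [hb] with x ⟨hre, hC⟩
  have hb0 : b x ≠ 0 := by rintro hzero; simp [hzero] at hre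
  have hdiff : (a x).re / (b x).re - c = ((a x / b x - c) * b x).re / (b x).re := by
    rw [sub_mul, div_mul_cancel₀ _ hb0, sub_re, re_ofReal_mul]
    field_simp
  rw [hdiff, Real.norm_eq_abs, abs_div, abs_of_pos hre, div_le_iff₀ hre]
  calc |((a x / b x - c) * b x).re| ≤ ‖a x / b x - c‖ * ‖b x‖ := by
        rw [← norm_mul]; exact abs_re_le_norm _
    _ ≤ ‖a x / b x - c‖ * (C * (b x).re) := by gcongr
    _ = C * ‖a x / b x - c‖ * (b x).re := by ring

lemma tendsto_norm_add_div_norm {α : Type*} {l : Filter α} {u : α → ℂ} (v : ℂ)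
    (hu : Tendsto (fun x => ‖u x‖) l atTop) :
    Tendsto (fun x => ‖u x + v‖ / ‖u x‖) l (𝓝 1) := by
  have hinv : Tendsto (fun x => v * (u x)⁻¹) l (𝓝 0) := by
    rw [tendsto_zero_iff_norm_tendsto_zero]
    simpa using hu.inv_tendsto_atTop.const_mul ‖v‖
  have hlim : Tendsto (fun x => ‖1 + v * (u x)⁻¹‖) l (𝓝 1) := by
    simpa using (hinv.const_add 1).norm
  refine hlim.congr' ?_
  filter_upwards [hu.eventually_gt_atTop 0] with x hx
  rw [← norm_div, add_div, div_self (norm_pos_iff.1 hx), div_eq_mul_inv]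

lemma tendsto_dH_succ_sub_dH {u : ℕ → ℂ} {w : ℂ} {c : ℝ} (hw : 0 < w.re) (hc : 0 < c)
    (hu : ∀ n, 0 < (u n).re) (hnorm : Tendsto (fun n => ‖u n‖) atTop atTop)
    (hq : Tendsto (fun n => ‖u (n + 1)‖ / ‖u n‖) atTop (𝓝 c))
    (hre : Tendsto (fun n => (u (n + 1)).re / (u n).re) atTop (𝓝 c)) :
    Tendsto (fun n => dH w (u (n + 1)) - dH w (u n)) atTop (𝓝 (Real.log c / 2)) := by
  set S : ℕ → ℝ := fun n => ‖u n + conj w‖ + ‖u n - w‖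
  have hS_pos : ∀ n, 0 < S n := fun n =>
    add_pos_of_pos_of_nonneg (norm_pos_iff.2 (add_conj_ne_zero (hu n) hw)) (norm_nonneg _)
  have hS : Tendsto (fun n => S n / ‖u n‖) atTop (𝓝 2) := by
    simpa only [S, add_div, sub_eq_add_neg, one_add_one_eq_two] using
      (tendsto_norm_add_div_norm (conj w) hnorm).add (tendsto_norm_add_div_norm (-w) hnorm)
  have hS_ratio : Tendsto (fun n => S (n + 1) / S n) atTop (𝓝 c) := by
    have := ((hS.comp (tendsto_add_atTop_nat 1)).mul hq).div hS two_ne_zero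
    rw [mul_div_cancel_left₀ c two_ne_zero] at this
    refine this.congr' ?_
    filter_upwards [hnorm.eventually_gt_atTop 0,
      (hnorm.comp (tendsto_add_atTop_nat 1)).eventually_gt_atTop 0] with n hn hn'
    have := (hS_pos n).ne'
    simp only [Pi.div_apply, Function.comp_apply] at hn' ⊢
    field_simp
  have hlog := ((Real.continuousAt_log hc.ne').tendsto.comp hS_ratio).sub
    (((Real.continuousAt_log hc.ne').tendsto.comp hre).div_const 2)
  rw [sub_half] at hlog
  refine hlog.congr fun n => ?_
  have h4w : 0 < 4 * w.re := by positivity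
  simp only [Function.comp_apply, dH_eq_log_sub_log hw (hu _),
    Real.log_div (hS_pos _).ne' (hS_pos _).ne', Real.log_div (hu _).ne' (hu _).ne',
    Real.log_mul h4w.ne' (hu _).ne']
  ring

lemma exists_norm_iterate_le_mul_re {f : ℂ → ℂ} {c : ℝ}
    (hmaps : ∀ z : ℂ, 0 < z.re → 0 < (f z).re) (hf : DifferentiableOn ℂ f {z : ℂ | 0 < z.re})
    (hang : HasAngularDerivAtInf f c) (hc : 1 < c) {z : ℂ} (hz : 0 < z.re) :
    ∃ C > 0, ∀ n, 0 < (f^[n] z).re ∧ ‖f^[n] z‖ ≤ C * (f^[n] z).re := by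
  have hu : ∀ n, 0 < (f^[n] z).re := Function.Iterate.rec (fun z : ℂ => 0 < z.re) hz hmaps
  have hsucc : ∀ n, f^[n + 1] z = f (f^[n] z) := fun n => Function.iterate_succ_apply' f n z
  have hrho : ∀ n, rhoH (f^[n + 1] z) (f^[n] z) ≤ rhoH (f z) z := by
    intro n
    induction n with
    | zero => rfl
    | succ n ih =>
      calc rhoH (f^[n + 2] z) (f^[n + 1] z) = rhoH (f (f^[n + 1] z)) (f (f^[n] z)) := by
            rw [hsucc (n + 1), hsucc n]
        _ ≤ rhoH (f^[n + 1] z) (f^[n] z) := rhoH_le_rhoH_of_mapsTo hmaps hf (hu _) (hu _)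
        _ ≤ rhoH (f z) z := ih
  have hr := rhoH_lt_one (hmaps z hz) hz
  obtain ⟨C, hC, hsector⟩ := exists_norm_le_mul_re_of_step_le (u := fun n => f^[n] z) hc
    (div_nonneg (mul_nonneg zero_le_two (rhoH_nonneg _ _)) (sub_nonneg.2 hr.le)) hz
    (fun n => hsucc n ▸ le_re_of_hasAngularDerivAtInf hmaps hf hang (by linarith) (hu n))
    (fun n => norm_sub_le_of_rhoH_le (hu _) (hu _) hr (hrho n))
  exact ⟨C, hC, fun n => ⟨hu n, hsector n⟩⟩

/-- for a hyperbolic self-map of the right half-plane with Denjoy–Wolff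
point ∞, the distance from any point to the orbit is eventually strictly increasing. -/
theorem stmt3 (f : ℂ → ℂ) (hf : HyperbolicAtInf f)
    (z : ℂ) (hz : 0 < z.re) (w : ℂ) (hw : 0 < w.re) :
    ∃ N : ℕ, ∀ n ≥ N, dH w (f^[n] z) < dH w (f^[n+1] z) := by
  obtain ⟨hmaps, hholo, hiter, c, hc, hang⟩ := hf
  obtain ⟨C, hC, hsector⟩ := exists_norm_iterate_le_mul_re hmaps hholo hang hc hz
  have hnorm : Tendsto (fun n => ‖f^[n] z‖) atTop atTop := by
    refine tendsto_atTop.2 fun M => ?_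
    obtain ⟨N, hN⟩ := hiter {z} (singleton_subset_iff.2 hz) isCompact_singleton M
    exact eventually_atTop.2 ⟨N, fun n hn => (hN n hn z rfl).le⟩
  have hq : Tendsto (fun n => f^[n + 1] z / f^[n] z) atTop (𝓝 c) := by
    simpa only [Function.iterate_succ_apply'] using
      HasAngularDerivAtInf.tendsto_div hang hC (Eventually.of_forall hsector) hnorm
  have hq_norm : Tendsto (fun n => ‖f^[n + 1] z‖ / ‖f^[n] z‖) atTop (𝓝 c) := by
    simpa [norm_div, abs_of_pos (by linarith : 0 < c)] using hq.norm
  have hlim := tendsto_dH_succ_sub_dH hw (by linarith) (fun n => (hsector n).1) hnorm hq_norm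
    (tendsto_re_div_re (Eventually.of_forall hsector) hq)
  obtain ⟨N, hN⟩ :=
    eventually_atTop.1 (hlim.eventually (eventually_gt_nhds (half_pos (Real.log_pos hc))))
  exact ⟨N, fun n hn => sub_pos.1 (hN n hn)⟩
end

section
/- Let γ₁, γ₂ : [0,∞) → ℍ be two continuous curves landing at ∞ such that arg(γ₁(t)) → θ and arg(γ₂(t)) → θ as t → ∞, for the same θ ∈ (−π/2, π/2). Let {z_n} ⊂ ℍ be a sequence with |z_n| → ∞, and for each n let π_n¹ be a projection of z_n onto γ₁ and π_n² a projection of z_n onto γ₂. Then d_ℍ(π_n¹, π_n²) → 0 as n → ∞. -/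
open Complex Filter Topology

/-!
Dilations `z ↦ z / r` with `r > 0` are isometries of `ℍ`, so it suffices to show that the
projection `p` of `z` onto one curve satisfies `p / |z| → e^{iθ}`: both rescaled projections
then converge to the same point of `ℍ`, where `d_ℍ` is continuous and vanishes on the diagonal.

Pick `w` on the curve with `|w| = |z|`. Since `1 - ρ(z, q)² = 4 Re z Re q / |z + q̄|²`, the
minimality of `p` gives `Re w |z + p̄|² ≤ Re p |z + w̄|²`. With `p = R e^{iα}`, `w = r e^{iβ}` this
yields `cos β (r - R)² ≤ 4 R r`, so `R → ∞` and hence `α → θ`; and then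
`cos β (r - R)² ≤ 6 |α - β| R r`, so `R / r → 1`.
-/

open ComplexConjugate

lemma normSq_add_conj_eq_normSq_sub_add (z w : ℂ) :
    normSq (z + conj w) = normSq (z - w) + 4 * z.re * w.re := by
  simp only [normSq_apply, add_re, add_im, sub_re, sub_im, conj_re, conj_im]
  ring

lemma normSq_add_conj_pos {z w : ℂ} (hz : 0 < z.re) (hw : 0 < w.re) :
    0 < normSq (z + conj w) := by
  rw [normSq_add_conj_eq_normSq_sub_add]
  nlinarith [normSq_nonneg (z - w)]

lemma one_sub_rhoH_sq_s4 {z w : ℂ} (hz : 0 < z.re) (hw : 0 < w.re) :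
    1 - rhoH z w ^ 2 = 4 * z.re * w.re / normSq (z + conj w) := by
  rw [rhoH, norm_div, div_pow, ← normSq_eq_norm_sq, ← normSq_eq_norm_sq,
    one_sub_div (normSq_add_conj_pos hz hw).ne', normSq_add_conj_eq_normSq_sub_add]
  ring

lemma rhoH_mem_Ioo {z w : ℂ} (hz : 0 < z.re) (hw : 0 < w.re) : rhoH z w ∈ Set.Ioo (-1) 1 := by
  have h0 : 0 ≤ rhoH z w := norm_nonneg _
  have h := one_sub_rhoH_sq_s4 hz hw
  have : 0 < 4 * z.re * w.re / normSq (z + conj w) := by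
    have := normSq_add_conj_pos hz hw
    positivity
  constructor <;> nlinarith

lemma dH_eq_artanh {z w : ℂ} (hz : 0 < z.re) (hw : 0 < w.re) :
    dH z w = Real.artanh (rhoH z w) := by
  rw [Real.artanh_eq_half_log (Set.Ioo_subset_Icc_self (rhoH_mem_Ioo hz hw)), dH]

lemma re_mul_normSq_le_of_dH_le {z p w : ℂ} (hz : 0 < z.re) (hp : 0 < p.re) (hw : 0 < w.re)
    (h : dH z p ≤ dH z w) : w.re * normSq (z + conj p) ≤ p.re * normSq (z + conj w) := by
  rw [dH_eq_artanh hz hp, dH_eq_artanh hz hw,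
    Real.artanh_le_artanh_iff (rhoH_mem_Ioo hz hp) (rhoH_mem_Ioo hz hw)] at h
  have hsq : 1 - rhoH z w ^ 2 ≤ 1 - rhoH z p ^ 2 :=
    sub_le_sub_left (pow_le_pow_left₀ (norm_nonneg _) h 2) 1
  rw [one_sub_rhoH_sq_s4 hz hw, one_sub_rhoH_sq_s4 hz hp,
    div_le_div_iff₀ (normSq_add_conj_pos hz hw) (normSq_add_conj_pos hz hp)] at hsq
  nlinarith

lemma rhoH_div_ofReal (z w : ℂ) {a : ℝ} (ha : a ≠ 0) : rhoH (z / a) (w / a) = rhoH z w := by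
  rw [rhoH, rhoH, map_div₀, conj_ofReal, ← sub_div, ← add_div,
    div_div_div_cancel_right₀ (ofReal_ne_zero.2 ha)]

lemma dH_div_ofReal (z w : ℂ) {a : ℝ} (ha : a ≠ 0) : dH (z / a) (w / a) = dH z w := by
  rw [dH, dH, rhoH_div_ofReal z w ha]

lemma dH_self (z : ℂ) : dH z z = 0 := by
  simp [dH, rhoH]

lemma continuousAt_dH_diag {u : ℂ} (hu : 0 < u.re) :
    ContinuousAt (fun q : ℂ × ℂ => dH q.1 q.2) (u, u) := by
  have hD : u + conj u ≠ 0 := by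
    intro h; have := congrArg re h; simp at this; linarith
  have hconj := Complex.continuous_conj
  unfold dH rhoH
  fun_prop (disch := simp_all)

section Curve

variable {γ : ℝ → ℂ} (hc : ContinuousOn γ (Set.Ici 0))
include hc

lemma exists_norm_eq_of_tendsto (hland : Tendsto (fun t => ‖γ t‖) atTop atTop) {r : ℝ}
    (hr : ‖γ 0‖ ≤ r) : ∃ t ≥ 0, ‖γ t‖ = r :=
  intermediate_value_Ici (continuous_norm.comp_continuousOn hc) hland hr

lemma tendsto_atTop_of_tendsto_norm_comp {ι : Type*} {l : Filter ι} {t : ι → ℝ}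
    (ht : ∀ i, 0 ≤ t i) (h : Tendsto (fun i => ‖γ (t i)‖) l atTop) : Tendsto t l atTop := by
  refine tendsto_atTop.2 fun T => ?_
  obtain ⟨C, hC⟩ := (isCompact_Icc (a := 0) (b := T)).exists_bound_of_continuousOn
    (hc.mono Set.Icc_subset_Ici_self)
  filter_upwards [h.eventually_gt_atTop C] with i hi
  by_contra! hiT
  exact (hC (t i) ⟨ht i, hiT.le⟩).not_gt (by simpa using hi)

end Curve

lemma norm_exp_ofReal_mul_I_sub_le (α β : ℝ) : ‖exp (β * I) - exp (α * I)‖ ≤ |β - α| := by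
  have : exp (β * I) - exp (α * I) = exp (α * I) * (exp (I * ↑(β - α)) - 1) := by
    rw [mul_sub, ← Complex.exp_add]; push_cast; ring_nf
  rw [this, norm_mul, norm_exp_ofReal_mul_I, one_mul]
  exact Real.norm_exp_I_mul_ofReal_sub_one_le

lemma normSq_add_conj_eq_polar (z q : ℂ) :
    normSq (z + conj q) = ‖z‖ ^ 2 + ‖q‖ ^ 2 + 2 * ‖q‖ * (z * exp (arg q * I)).re := by
  have hzq : (z * q).re = ‖q‖ * (z * exp (arg q * I)).re := by
    rw [← re_ofReal_mul, mul_left_comm, norm_mul_exp_arg_mul_I]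
  rw [normSq_add, normSq_conj, normSq_eq_norm_sq, normSq_eq_norm_sq, conj_conj, hzq]
  ring

section Comparison

variable {z p w : ℂ} (h : w.re * normSq (z + conj p) ≤ p.re * normSq (z + conj w))
  (hw : ‖w‖ = ‖z‖) (hz : z ≠ 0)
include h hw hz

lemma cos_arg_mul_sq_sub_norm_le_four (hβ : 0 ≤ Real.cos (arg w)) :
    Real.cos (arg w) * (‖z‖ - ‖p‖) ^ 2 ≤ 4 * ‖p‖ * ‖z‖ := by
  have hwre : w.re = ‖z‖ * Real.cos (arg w) := by rw [← norm_mul_cos_arg w, hw]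
  have hDp : (‖z‖ - ‖p‖) ^ 2 ≤ normSq (z + conj p) := by
    have := abs_norm_sub_norm_le z (-conj p)
    rw [norm_neg, norm_conj, sub_neg_eq_add] at this
    rw [normSq_eq_norm_sq]
    exact sq_le_sq' (abs_le.1 this).1 (abs_le.1 this).2
  have hDw : normSq (z + conj w) ≤ (2 * ‖z‖) ^ 2 := by
    rw [normSq_eq_norm_sq]
    gcongr
    exact (norm_add_le _ _).trans (by rw [norm_conj, hw, two_mul])
  have : ‖z‖ * (Real.cos (arg w) * (‖z‖ - ‖p‖) ^ 2) ≤ ‖z‖ * (4 * ‖p‖ * ‖z‖) :=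
    calc _ = w.re * (‖z‖ - ‖p‖) ^ 2 := by rw [hwre]; ring
      _ ≤ w.re * normSq (z + conj p) := by gcongr; rw [hwre]; positivity
      _ ≤ p.re * normSq (z + conj w) := h
      _ ≤ ‖p‖ * (2 * ‖z‖) ^ 2 := mul_le_mul (re_le_norm p) hDw (normSq_nonneg _) (norm_nonneg _)
      _ = _ := by ring
  exact le_of_mul_le_mul_left this (norm_pos_iff.2 hz)

lemma cos_arg_mul_sq_sub_norm_le :
    Real.cos (arg w) * (‖z‖ - ‖p‖) ^ 2 ≤ 6 * |arg p - arg w| * ‖p‖ * ‖z‖ := by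
  set r := ‖z‖
  set R := ‖p‖
  set α := arg p
  set β := arg w
  set x : ℝ → ℝ := fun φ => (z * exp (φ * I)).re
  have hr : 0 < r := norm_pos_iff.2 hz
  have hDp : normSq (z + conj p) = r ^ 2 + R ^ 2 + 2 * R * x α := normSq_add_conj_eq_polar z p
  have hDw : normSq (z + conj w) = r ^ 2 + r ^ 2 + 2 * r * x β := by
    rw [normSq_add_conj_eq_polar, hw]
  have hpre : p.re = R * Real.cos α := (norm_mul_cos_arg p).symm
  have hwre : w.re = r * Real.cos β := by rw [← norm_mul_cos_arg w, hw]
  have hxβ : |x β| ≤ r := (abs_re_le_norm _).trans (by simp [r])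
  have hx : |x β - x α| ≤ r * |α - β| :=
    calc |x β - x α| = |(z * (exp (β * I) - exp (α * I))).re| := by simp [x, mul_sub]
      _ ≤ r * |β - α| := (abs_re_le_norm _).trans
          (by rw [norm_mul]; gcongr; exact norm_exp_ofReal_mul_I_sub_le α β)
      _ = r * |α - β| := by rw [abs_sub_comm]
  have hcos : (Real.cos α - Real.cos β) * (r + x β) ≤ |α - β| * (2 * r) := by
    have hnn : 0 ≤ r + x β := by linarith [(abs_le.1 hxβ).1]
    calc _ ≤ |Real.cos α - Real.cos β| * (r + x β) := by gcongr; exact le_abs_self _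
      _ ≤ |α - β| * (2 * r) := mul_le_mul (Real.abs_cos_sub_cos_le α β)
          (by linarith [(abs_le.1 hxβ).2]) hnn (abs_nonneg _)
  have hcross : Real.cos β * (x β - x α) ≤ r * |α - β| :=
    calc _ ≤ |Real.cos β| * |x β - x α| := by rw [← abs_mul]; exact le_abs_self _
      _ ≤ 1 * (r * |α - β|) := by gcongr; exact Real.abs_cos_le_one β
      _ = r * |α - β| := one_mul _
  have key : Real.cos β * (r ^ 2 + R ^ 2 + 2 * R * x α) ≤ 2 * R * Real.cos α * (r + x β) := by
    rw [hDp, hDw, hpre, hwre] at h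
    exact le_of_mul_le_mul_left (by linarith) hr
  calc Real.cos β * (r - R) ^ 2
      = Real.cos β * (r ^ 2 + R ^ 2 + 2 * R * x α) - 2 * R * (Real.cos β * (r + x α)) := by ring
    _ ≤ 2 * R * ((Real.cos α - Real.cos β) * (r + x β) + Real.cos β * (x β - x α)) := by
        linarith
    _ ≤ 2 * R * (|α - β| * (2 * r) + r * |α - β|) := by gcongr
    _ = 6 * |α - β| * R * r := by ring

end Comparison

lemma le_mul_of_sq_sub_le {a b K : ℝ} (hb : 0 ≤ b) (hK : 0 ≤ K)
    (h : (a - b) ^ 2 ≤ K * a * b) : a ≤ (K + 2) * b := by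
  by_contra! hlt
  have ha' : 0 < a := lt_of_le_of_lt (by positivity) hlt
  nlinarith [mul_lt_mul_of_pos_left hlt ha', sq_nonneg b]

lemma tendsto_div_of_sq_sub_le {ι : Type*} {l : Filter ι} {a b K : ι → ℝ}
    (hK0 : ∀ i, 0 ≤ K i) (hK : Tendsto K l (𝓝 0)) (hb : ∀ᶠ i in l, 0 < b i)
    (h : ∀ᶠ i in l, (a i - b i) ^ 2 ≤ K i * a i * b i) :
    Tendsto (fun i => a i / b i) l (𝓝 1) := by
  have hsq : Tendsto (fun i => (a i / b i - 1) ^ 2) l (𝓝 0) := by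
    have hlim : Tendsto (fun i => K i * (K i + 2)) l (𝓝 0) := by
      simpa using hK.mul (hK.add_const 2)
    refine squeeze_zero' (Eventually.of_forall fun i => sq_nonneg _) ?_ hlim
    filter_upwards [hb, h] with i hbi hi
    have hab := le_mul_of_sq_sub_le hbi.le (hK0 i) hi
    calc (a i / b i - 1) ^ 2 = (a i - b i) ^ 2 / b i ^ 2 := by field_simp
      _ ≤ K i * a i * b i / b i ^ 2 := by gcongr
      _ = K i * (a i / b i) := by field_simp
      _ ≤ K i * (K i + 2) :=
          mul_le_mul_of_nonneg_left (by rwa [div_le_iff₀ hbi]) (hK0 i)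
  have habs := hsq.sqrt
  simp only [Real.sqrt_sq_eq_abs, Real.sqrt_zero] at habs
  exact tendsto_sub_nhds_zero_iff.1 ((tendsto_zero_iff_abs_tendsto_zero _).2 habs)

section Sequences

variable {ι : Type*} {l : Filter ι} {z p w : ι → ℂ} {c : ℝ}
  (h : ∀ i, (w i).re * normSq (z i + conj (p i)) ≤ (p i).re * normSq (z i + conj (w i)))
  (hw : ∀ᶠ i in l, ‖w i‖ = ‖z i‖) (hc : 0 < c) (hcos : ∀ᶠ i in l, c ≤ Real.cos (arg (w i)))
include h hw hc hcos

lemma tendsto_norm_atTop_of_re_mul_normSq_le (hzinf : Tendsto (fun i => ‖z i‖) l atTop) :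
    Tendsto (fun i => ‖p i‖) l atTop := by
  have hbound : ∀ᶠ i in l, ‖z i‖ / (4 / c + 2) ≤ ‖p i‖ := by
    filter_upwards [hw, hcos, hzinf.eventually_gt_atTop 0] with i hwi hci hzi
    have h4 := cos_arg_mul_sq_sub_norm_le_four (h i) hwi (norm_pos_iff.1 hzi) (hc.le.trans hci)
    have hsq : (‖z i‖ - ‖p i‖) ^ 2 ≤ 4 / c * ‖z i‖ * ‖p i‖ := by
      rw [div_mul_eq_mul_div, div_mul_eq_mul_div, le_div_iff₀ hc]
      nlinarith [sq_nonneg (‖z i‖ - ‖p i‖)]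
    rw [div_le_iff₀ (by positivity)]
    linarith [le_mul_of_sq_sub_le (norm_nonneg _) (by positivity) hsq]
  exact tendsto_atTop_mono' l hbound (hzinf.atTop_div_const (by positivity))

lemma tendsto_norm_div_norm_of_re_mul_normSq_le (hz : ∀ᶠ i in l, z i ≠ 0)
    (harg : Tendsto (fun i => arg (p i) - arg (w i)) l (𝓝 0)) :
    Tendsto (fun i => ‖p i‖ / ‖z i‖) l (𝓝 1) := by
  refine tendsto_div_of_sq_sub_le (K := fun i => 6 * |arg (p i) - arg (w i)| / c)
    (fun i => by positivity) ?_ (hz.mono fun i => norm_pos_iff.2) ?_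
  · simpa using (harg.abs.const_mul 6).div_const c
  · filter_upwards [hw, hcos, hz] with i hwi hci hzi
    have h6 := cos_arg_mul_sq_sub_norm_le (h i) hwi hzi
    rw [div_mul_eq_mul_div, div_mul_eq_mul_div, le_div_iff₀ hc]
    nlinarith [sq_nonneg (‖z i‖ - ‖p i‖)]

end Sequences

theorem tendsto_div_norm_of_isProjH {ι : Type*} {l : Filter ι} {γ : ℝ → ℂ}
    (hc : ContinuousOn γ (Set.Ici 0)) (hin : ∀ t ≥ (0 : ℝ), 0 < (γ t).re)
    (hland : Tendsto (fun t => ‖γ t‖) atTop atTop) {θ : ℝ} (hθ : 0 < Real.cos θ)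
    (hslope : Tendsto (fun t => arg (γ t)) atTop (𝓝 θ)) {z p : ι → ℂ}
    (hz : ∀ i, 0 < (z i).re) (hzinf : Tendsto (fun i => ‖z i‖) l atTop)
    (hp : ∀ i, IsProjH γ (z i) (p i)) :
    Tendsto (fun i => p i / ‖z i‖) l (𝓝 (exp (θ * I))) := by
  choose tp htp0 hpt using fun i => (hp i).1
  choose τ hτ0 hτ using fun r : ℝ => exists_norm_eq_of_tendsto hc hland (le_max_right r ‖γ 0‖)
  set w := fun i => γ (τ ‖z i‖)
  have hw : ∀ᶠ i in l, ‖w i‖ = ‖z i‖ :=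
    (hzinf.eventually_ge_atTop ‖γ 0‖).mono fun i hi => (hτ _).trans (max_eq_left hi)
  have hwarg : Tendsto (fun i => arg (w i)) l (𝓝 θ) :=
    hslope.comp (tendsto_atTop_of_tendsto_norm_comp hc (fun i => hτ0 _)
      (tendsto_atTop_mono (fun i => (hτ _).symm ▸ le_max_left _ _) hzinf))
  have hcmp (i : ι) :
      (w i).re * normSq (z i + conj (p i)) ≤ (p i).re * normSq (z i + conj (w i)) :=
    re_mul_normSq_le_of_dH_le (hz i) (hpt i ▸ hin _ (htp0 i)) (hin _ (hτ0 _))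
      ((hp i).2 _ (hτ0 _))
  have hcos : ∀ᶠ i in l, Real.cos θ / 2 ≤ Real.cos (arg (w i)) :=
    (Real.continuous_cos.tendsto θ |>.comp hwarg).eventually
      (eventually_ge_nhds (half_lt_self hθ))
  have hparg : Tendsto (fun i => arg (p i)) l (𝓝 θ) := by
    simp_rw [hpt]
    refine hslope.comp (tendsto_atTop_of_tendsto_norm_comp hc htp0 ?_)
    simpa only [hpt] using
      tendsto_norm_atTop_of_re_mul_normSq_le hcmp hw (half_pos hθ) hcos hzinf
  have hratio := tendsto_norm_div_norm_of_re_mul_normSq_le hcmp hw (half_pos hθ) hcos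
    (hzinf.eventually_gt_atTop 0 |>.mono fun i => norm_pos_iff.1)
    (by simpa using hparg.sub hwarg)
  have hpolar : Tendsto (fun i => ((‖p i‖ / ‖z i‖ : ℝ) : ℂ) * exp (arg (p i) * I)) l
      (𝓝 ((1 : ℝ) * exp (θ * I))) :=
    (continuous_ofReal.tendsto _ |>.comp hratio).mul
      ((by fun_prop : Continuous fun φ : ℝ => exp (φ * I)).tendsto θ |>.comp hparg)
  rw [ofReal_one, one_mul] at hpolar
  refine hpolar.congr fun i => ?_
  rw [ofReal_div, div_mul_eq_mul_div, norm_mul_exp_arg_mul_I]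

/-- projections of a sequence tending to ∞ onto two curves landing
at ∞ with the same slope θ are asymptotically close. -/
theorem stmt4 (γ₁ γ₂ : ℝ → ℂ)
    (h1c : ContinuousOn γ₁ (Set.Ici 0)) (h2c : ContinuousOn γ₂ (Set.Ici 0))
    (h1in : ∀ t ≥ (0:ℝ), 0 < (γ₁ t).re) (h2in : ∀ t ≥ (0:ℝ), 0 < (γ₂ t).re)
    (h1land : Tendsto (fun t : ℝ => ‖γ₁ t‖) atTop atTop)
    (h2land : Tendsto (fun t : ℝ => ‖γ₂ t‖) atTop atTop)
    (θ : ℝ) (hθ : θ ∈ Set.Ioo (-(Real.pi/2)) (Real.pi/2))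
    (h1slope : Tendsto (fun t : ℝ => (γ₁ t).arg) atTop (𝓝 θ))
    (h2slope : Tendsto (fun t : ℝ => (γ₂ t).arg) atTop (𝓝 θ))
    (z : ℕ → ℂ) (hz : ∀ n, 0 < (z n).re)
    (hzinf : Tendsto (fun n : ℕ => ‖z n‖) atTop atTop)
    (p₁ p₂ : ℕ → ℂ)
    (hp₁ : ∀ n : ℕ, IsProjH γ₁ (z n) (p₁ n))
    (hp₂ : ∀ n : ℕ, IsProjH γ₂ (z n) (p₂ n)) :
    Tendsto (fun n : ℕ => dH (p₁ n) (p₂ n)) atTop (𝓝 0) := by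
  have hcos : 0 < Real.cos θ := Real.cos_pos_of_mem_Ioo hθ
  have h₁ := tendsto_div_norm_of_isProjH h1c h1in h1land hcos h1slope hz hzinf hp₁
  have h₂ := tendsto_div_norm_of_isProjH h2c h2in h2land hcos h2slope hz hzinf hp₂
  have hlim := (continuousAt_dH_diag (by rwa [exp_ofReal_mul_I_re])).tendsto.comp
    (h₁.prodMk_nhds h₂)
  rw [dH_self] at hlim
  refine hlim.congr' ?_
  filter_upwards [hzinf.eventually_gt_atTop 0] with n hn
  exact dH_div_ofReal _ _ hn.ne'
end

section
/- Let {r_n}, {R_n} ⊂ (0,∞) and let {θ_n}, {φ_n} ⊂ (−π/2, π/2) be sequences both converging to the same θ ∈ (−π/2, π/2). Then the limit lim_{n→∞} d_ℍ(r_n, R_n) exists (in [0,∞]) if and only if the limit lim_{n→∞} d_ℍ(r_n·e^{iθ_n}, R_n·e^{iφ_n}) exists (in [0,∞]). Moreover, lim_{n→∞} d_ℍ(r_n, R_n) = 0 if and only if lim_{n→∞} d_ℍ(r_n e^{iθ_n}, R_n e^{iφ_n}) = 0, and lim_{n→∞} d_ℍ(r_n, R_n) = +∞ if and only if lim_{n→∞}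 d_ℍ(r_n e^{iθ_n}, R_n e^{iφ_n}) = +∞. -/
open Complex Filter Topology

/-! Rotating by `I` identifies `dH` with half of Mathlib's hyperbolic distance on the upper
half-plane, so `cosh (2 dH z w) = 1 + ‖z - w‖² / (2 Re z Re w)`. For `z = r e^{iθ}` and
`w = R e^{iφ}` this gives the affine relation
`cosh (2 dH r R) = cos θ cos φ · cosh (2 dH z w) + (cos (θ - φ) - cos θ cos φ)`,
whose coefficients converge to `cos² θ > 0` and `1 - cos² θ`. An affine change of variables
with convergent coefficients and positive limiting slope preserves convergence and divergence
to `+∞`, and here it also preserves the limit `1` because the limiting coefficients sum to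
`1`. Finally `t ↦ cosh (2t)` is a homeomorphism `[0, ∞) → [1, ∞)` tending to `+∞` with `t`. -/

def UpperHalfPlane.ofRightHalfPlane (z : ℂ) (hz : 0 < z.re) : UpperHalfPlane :=
  UpperHalfPlane.mk (Complex.I * z) (by simpa using hz)

lemma rhoH_eq_tanh_half_dist {z w : ℂ} (hz : 0 < z.re) (hw : 0 < w.re) :
    rhoH z w = Real.tanh (dist (UpperHalfPlane.ofRightHalfPlane z hz)
      (UpperHalfPlane.ofRightHalfPlane w hw) / 2) := by
  rw [UpperHalfPlane.tanh_half_dist, rhoH, norm_div]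
  simp only [UpperHalfPlane.ofRightHalfPlane, UpperHalfPlane.coe_mk, Complex.dist_eq, map_mul,
    Complex.conj_I]
  rw [← mul_sub, neg_mul, sub_neg_eq_add, ← mul_add, norm_mul, norm_mul, Complex.norm_I,
    one_mul, one_mul]

lemma dH_eq_half_dist {z w : ℂ} (hz : 0 < z.re) (hw : 0 < w.re) :
    dH z w = dist (UpperHalfPlane.ofRightHalfPlane z hz)
      (UpperHalfPlane.ofRightHalfPlane w hw) / 2 := by
  rw [dH, rhoH_eq_tanh_half_dist hz hw, ← Real.artanh_eq_half_log, Real.artanh_tanh]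
  exact ⟨(Real.neg_one_lt_tanh _).le, (Real.tanh_lt_one _).le⟩

lemma dH_nonneg {z w : ℂ} (hz : 0 < z.re) (hw : 0 < w.re) : 0 ≤ dH z w := by
  rw [dH_eq_half_dist hz hw]
  positivity

lemma cosh_two_mul_dH {z w : ℂ} (hz : 0 < z.re) (hw : 0 < w.re) :
    Real.cosh (2 * dH z w) = 1 + ‖z - w‖ ^ 2 / (2 * z.re * w.re) := by
  rw [dH_eq_half_dist hz hw, mul_div_cancel₀ _ two_ne_zero, UpperHalfPlane.cosh_dist]
  simp [UpperHalfPlane.ofRightHalfPlane, Complex.dist_eq, ← mul_sub]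

lemma re_ofReal_mul_exp_mul_I (r θ : ℝ) : ((r : ℂ) * exp (θ * I)).re = r * Real.cos θ := by
  simp [Complex.exp_ofReal_mul_I_re]

lemma re_ofReal_mul_exp_mul_I_pos {r θ : ℝ} (hr : 0 < r) (hθ : 0 < Real.cos θ) :
    0 < ((r : ℂ) * exp (θ * I)).re := by
  rw [re_ofReal_mul_exp_mul_I]; positivity

lemma norm_sub_sq_polar (r R θ φ : ℝ) :
    ‖(r : ℂ) * exp (θ * I) - R * exp (φ * I)‖ ^ 2 =
      r ^ 2 + R ^ 2 - 2 * r * R * Real.cos (θ - φ) := by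
  simp only [Complex.sq_norm, Complex.normSq_apply, Complex.sub_re, Complex.sub_im, Complex.mul_re,
    Complex.mul_im, Complex.exp_ofReal_mul_I_re, Complex.exp_ofReal_mul_I_im, Complex.ofReal_re,
    Complex.ofReal_im, Real.cos_sub]
  linear_combination r ^ 2 * Real.sin_sq_add_cos_sq θ + R ^ 2 * Real.sin_sq_add_cos_sq φ

lemma cosh_two_mul_dH_ofReal_eq {r R θ φ : ℝ} (hr : 0 < r) (hR : 0 < R)
    (hθ : 0 < Real.cos θ) (hφ : 0 < Real.cos φ) :
    Real.cosh (2 * dH r R) = Real.cos θ * Real.cos φ *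
      (Real.cosh (2 * dH (r * exp (θ * I)) (R * exp (φ * I))) - 1) + Real.cos (θ - φ) := by
  rw [cosh_two_mul_dH (by simpa using hr) (by simpa using hR),
    cosh_two_mul_dH (re_ofReal_mul_exp_mul_I_pos hr hθ) (re_ofReal_mul_exp_mul_I_pos hR hφ),
    norm_sub_sq_polar, re_ofReal_mul_exp_mul_I, re_ofReal_mul_exp_mul_I, ← Complex.ofReal_sub,
    Complex.norm_real, Real.norm_eq_abs, sq_abs, Complex.ofReal_re, Complex.ofReal_re]
  field_simp
  ring

section AffineTransfer

variable {X Y a b : ℕ → ℝ} {α β : ℝ}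

lemma tendsto_nhds_iff_of_eq_mul_add (hXY : ∀ n, X n = a n * Y n + b n) (ha0 : ∀ n, a n ≠ 0)
    (ha : Tendsto a atTop (𝓝 α)) (hα : α ≠ 0) (hb : Tendsto b atTop (𝓝 β)) (M : ℝ) :
    Tendsto Y atTop (𝓝 M) ↔ Tendsto X atTop (𝓝 (α * M + β)) := by
  have hYX : Y = fun n => (X n - b n) / a n := by
    funext n; rw [hXY, add_sub_cancel_right, mul_div_cancel_left₀ _ (ha0 n)]
  refine ⟨fun hY => ?_, fun hX => ?_⟩
  · rw [funext hXY]
    exact (ha.mul hY).add hb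
  · have hlim := (hX.sub hb).div ha hα
    rw [add_sub_cancel_right, mul_div_cancel_left₀ _ hα] at hlim
    rwa [hYX]

lemma exists_tendsto_nhds_iff_of_eq_mul_add (hXY : ∀ n, X n = a n * Y n + b n)
    (ha0 : ∀ n, a n ≠ 0) (ha : Tendsto a atTop (𝓝 α)) (hα : α ≠ 0) (hb : Tendsto b atTop (𝓝 β)) :
    (∃ M, Tendsto Y atTop (𝓝 M)) ↔ ∃ M, Tendsto X atTop (𝓝 M) := by
  simp_rw [tendsto_nhds_iff_of_eq_mul_add hXY ha0 ha hα hb]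
  refine ⟨fun ⟨M, hM⟩ => ⟨_, hM⟩, fun ⟨N, hN⟩ => ⟨(N - β) / α, ?_⟩⟩
  rwa [mul_div_cancel₀ _ hα, sub_add_cancel]

lemma tendsto_atTop_iff_of_eq_mul_add (hXY : ∀ n, X n = a n * Y n + b n) (ha0 : ∀ n, a n ≠ 0)
    (ha : Tendsto a atTop (𝓝 α)) (hα : 0 < α) (hb : Tendsto b atTop (𝓝 β)) :
    Tendsto Y atTop atTop ↔ Tendsto X atTop atTop := by
  have hYX : Y = fun n => (X n + -b n) * (a n)⁻¹ := by
    funext n; rw [hXY, add_neg_cancel_right, mul_comm, inv_mul_cancel_left₀ (ha0 n)]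
  refine ⟨fun hY => ?_, fun hX => ?_⟩
  · rw [funext hXY]
    simpa only [mul_comm] using (hY.atTop_mul_pos hα ha).atTop_add hb
  · rw [hYX]
    exact (hX.atTop_add hb.neg).atTop_mul_pos (inv_pos.2 hα) (ha.inv₀ hα.ne')

end AffineTransfer

section CoshTransfer

variable {s : ℕ → ℝ}

lemma Real.tendsto_arcosh_atTop : Tendsto Real.arcosh atTop atTop := by
  refine tendsto_atTop_mono' _ ?_ Real.tendsto_log_atTop
  filter_upwards [eventually_gt_atTop 0] with x hx
  exact Real.log_le_log hx (le_add_of_nonneg_right (Real.sqrt_nonneg _))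

lemma eq_half_arcosh_cosh_two_mul (hs : ∀ n, 0 ≤ s n) (n : ℕ) :
    s n = Real.arcosh (Real.cosh (2 * s n)) / 2 := by
  rw [Real.arcosh_cosh (by linarith [hs n]), mul_div_cancel_left₀ _ two_ne_zero]

lemma tendsto_cosh_two_mul_nhds_iff (hs : ∀ n, 0 ≤ s n) {L : ℝ} (hL : 0 ≤ L) :
    Tendsto s atTop (𝓝 L) ↔
      Tendsto (fun n => Real.cosh (2 * s n)) atTop (𝓝 (Real.cosh (2 * L))) := by
  refine ⟨fun h => (Real.continuous_cosh.tendsto _).comp (h.const_mul 2), fun h => ?_⟩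
  have harcosh : Tendsto (fun n => Real.arcosh (Real.cosh (2 * s n))) atTop
      (𝓝 (Real.arcosh (Real.cosh (2 * L)))) :=
    (Real.continuousOn_arcosh.continuousWithinAt (Real.one_le_cosh _)).tendsto.comp
      (tendsto_nhdsWithin_iff.2 ⟨h, Eventually.of_forall fun n => Real.one_le_cosh _⟩)
  rw [Real.arcosh_cosh (by linarith)] at harcosh
  rw [tendsto_congr (eq_half_arcosh_cosh_two_mul hs)]
  simpa using harcosh.div_const 2

lemma tendsto_zero_iff_cosh_two_mul (hs : ∀ n, 0 ≤ s n) :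
    Tendsto s atTop (𝓝 0) ↔ Tendsto (fun n => Real.cosh (2 * s n)) atTop (𝓝 1) := by
  simpa using tendsto_cosh_two_mul_nhds_iff hs le_rfl

lemma exists_tendsto_nhds_iff_cosh_two_mul (hs : ∀ n, 0 ≤ s n) :
    (∃ L, Tendsto s atTop (𝓝 L)) ↔ ∃ M, Tendsto (fun n => Real.cosh (2 * s n)) atTop (𝓝 M) := by
  refine ⟨fun ⟨L, hL⟩ => ⟨_, (tendsto_cosh_two_mul_nhds_iff hs (ge_of_tendsto' hL hs)).1 hL⟩,
    fun ⟨M, hM⟩ => ?_⟩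
  have hM1 : 1 ≤ M := ge_of_tendsto' hM fun n => Real.one_le_cosh _
  refine ⟨Real.arcosh M / 2, (tendsto_cosh_two_mul_nhds_iff hs ?_).2 ?_⟩
  · exact div_nonneg (Real.arcosh_nonneg hM1) zero_le_two
  · rwa [mul_div_cancel₀ _ two_ne_zero, Real.cosh_arcosh hM1]

lemma tendsto_atTop_iff_cosh_two_mul (hs : ∀ n, 0 ≤ s n) :
    Tendsto s atTop atTop ↔ Tendsto (fun n => Real.cosh (2 * s n)) atTop atTop := by
  refine ⟨fun h => tendsto_atTop_mono (fun n => ?_) h, fun h => ?_⟩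
  · linarith [hs n, Real.self_le_sinh_iff.2 (by linarith [hs n] : 0 ≤ 2 * s n),
      Real.sinh_lt_cosh (2 * s n)]
  · rw [tendsto_congr (eq_half_arcosh_cosh_two_mul hs)]
    exact (Real.tendsto_arcosh_atTop.comp h).atTop_div_const two_pos

end CoshTransfer

/-- for positive sequences r_n, R_n and angles θ_n, φ_n → θ ∈ (−π/2, π/2),
the limit of d_ℍ(r_n, R_n) exists (in [0,∞]) iff the limit of
d_ℍ(r_n e^{iθ_n}, R_n e^{iφ_n}) exists (in [0,∞]); moreover one limit is 0 (resp. +∞)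
iff the other is. -/
theorem stmt10 (r R θs φs : ℕ → ℝ)
    (hr : ∀ n, 0 < r n) (hR : ∀ n, 0 < R n)
    (hθs : ∀ n, θs n ∈ Set.Ioo (-(Real.pi/2)) (Real.pi/2))
    (hφs : ∀ n, φs n ∈ Set.Ioo (-(Real.pi/2)) (Real.pi/2))
    (θ : ℝ) (hθ : θ ∈ Set.Ioo (-(Real.pi/2)) (Real.pi/2))
    (hθlim : Tendsto θs atTop (𝓝 θ)) (hφlim : Tendsto φs atTop (𝓝 θ)) :
    (((∃ L : ℝ, Tendsto (fun n : ℕ => dH ((r n : ℂ)) ((R n : ℂ))) atTop (𝓝 L)) ∨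
        Tendsto (fun n : ℕ => dH ((r n : ℂ)) ((R n : ℂ))) atTop atTop) ↔
      ((∃ L : ℝ, Tendsto (fun n : ℕ =>
            dH ((r n : ℂ) * Complex.exp ((θs n : ℂ) * I))
               ((R n : ℂ) * Complex.exp ((φs n : ℂ) * I))) atTop (𝓝 L)) ∨
        Tendsto (fun n : ℕ =>
            dH ((r n : ℂ) * Complex.exp ((θs n : ℂ) * I))
               ((R n : ℂ) * Complex.exp ((φs n : ℂ) * I))) atTop atTop)) ∧
    (Tendsto (fun n : ℕ => dH ((r n : ℂ)) ((R n : ℂ))) atTop (𝓝 0) ↔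
      Tendsto (fun n : ℕ =>
          dH ((r n : ℂ) * Complex.exp ((θs n : ℂ) * I))
             ((R n : ℂ) * Complex.exp ((φs n : ℂ) * I))) atTop (𝓝 0)) ∧
    (Tendsto (fun n : ℕ => dH ((r n : ℂ)) ((R n : ℂ))) atTop atTop ↔
      Tendsto (fun n : ℕ =>
          dH ((r n : ℂ) * Complex.exp ((θs n : ℂ) * I))
             ((R n : ℂ) * Complex.exp ((φs n : ℂ) * I))) atTop atTop) := by
  set a : ℕ → ℝ := fun n => Real.cos (θs n) * Real.cos (φs n)
  have hcos : ∀ n, 0 < Real.cos (θs n) ∧ 0 < Real.cos (φs n) :=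
    fun n => ⟨Real.cos_pos_of_mem_Ioo (hθs n), Real.cos_pos_of_mem_Ioo (hφs n)⟩
  have hXY : ∀ n, Real.cosh (2 * dH (r n) (R n)) = a n *
      Real.cosh (2 * dH (r n * exp (θs n * I)) (R n * exp (φs n * I))) +
      (Real.cos (θs n - φs n) - a n) := fun n => by
    rw [cosh_two_mul_dH_ofReal_eq (hr n) (hR n) (hcos n).1 (hcos n).2]; ring
  have ha0 : ∀ n, a n ≠ 0 := fun n => (mul_pos (hcos n).1 (hcos n).2).ne'
  have hα : 0 < Real.cos θ * Real.cos θ := mul_self_pos.2 (Real.cos_pos_of_mem_Ioo hθ).ne'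
  have ha : Tendsto a atTop (𝓝 (Real.cos θ * Real.cos θ)) :=
    ((Real.continuous_cos.tendsto θ).comp hθlim).mul ((Real.continuous_cos.tendsto θ).comp hφlim)
  have hb : Tendsto (fun n => Real.cos (θs n - φs n) - a n) atTop
      (𝓝 (1 - Real.cos θ * Real.cos θ)) := by
    simpa using ((Real.continuous_cos.tendsto _).comp (hθlim.sub hφlim)).sub ha
  have hd0 : ∀ n, 0 ≤ dH (r n) (R n) := fun n =>
    dH_nonneg (by simpa using hr n) (by simpa using hR n)
  have hd : ∀ n, 0 ≤ dH (r n * exp (θs n * I)) (R n * exp (φs n * I)) := fun n =>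
    dH_nonneg (re_ofReal_mul_exp_mul_I_pos (hr n) (hcos n).1)
      (re_ofReal_mul_exp_mul_I_pos (hR n) (hcos n).2)
  rw [exists_tendsto_nhds_iff_cosh_two_mul hd0, exists_tendsto_nhds_iff_cosh_two_mul hd,
    tendsto_atTop_iff_cosh_two_mul hd0, tendsto_atTop_iff_cosh_two_mul hd,
    tendsto_zero_iff_cosh_two_mul hd0, tendsto_zero_iff_cosh_two_mul hd,
    tendsto_nhds_iff_of_eq_mul_add hXY ha0 ha hα.ne' hb, mul_one, add_sub_cancel,
    exists_tendsto_nhds_iff_of_eq_mul_add hXY ha0 ha hα.ne' hb,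
    tendsto_atTop_iff_of_eq_mul_add hXY ha0 ha hα hb]
  exact ⟨Iff.rfl, Iff.rfl, Iff.rfl⟩
end

section
/- Let {r_n} ⊂ (0,∞) be a sequence with r_n → +∞ and let θ ∈ (−π/2, π/2). Then for any r₀ > 0, lim_{n→∞} ( d_ℍ(r₀·e^{iθ}, r_n·e^{iθ}) − d_ℍ(r₀, r_n) ) = −log(cos θ), and this limit belongs to [0, +∞). -/
/-! On a ray through `e^{iθ}` the pseudo-hyperbolic distance is a hyperbolic tangent:
`ρ(r₀e^{iθ}, s e^{iθ}) = tanh (arsinh (y / cos θ))` with `y = |s - r₀| / (2√(r₀ s))`, because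
`|r₀e^{iθ} + s e^{-iθ}|² = (s - r₀)² + 4 r₀ s cos² θ`. Hence `d_ℍ(r₀e^{iθ}, s e^{iθ}) = arsinh (y / cos θ)`
and `d_ℍ(r₀, s) = arsinh y`. As `s → ∞` also `y → ∞`, and `arsinh x = log (2x) + o(1)`, so the
difference tends to `log (1 / cos θ)`. -/

open Complex Filter Topology

lemma dH_eq_of_rhoH_eq_tanh {z w : ℂ} {t : ℝ} (h : rhoH z w = Real.tanh t) : dH z w = t := by
  rw [dH, h, ← Real.artanh_eq_half_log ⟨(Real.neg_one_lt_tanh t).le, (Real.tanh_lt_one t).le⟩,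
    Real.artanh_tanh]

lemma norm_ofReal_mul_exp_add_conj (r₀ s θ : ℝ) :
    ‖(r₀ : ℂ) * Complex.exp (θ * I) + (starRingEnd ℂ) ((s : ℂ) * Complex.exp (θ * I))‖
      = √((s - r₀) ^ 2 + 4 * r₀ * s * Real.cos θ ^ 2) := by
  rw [Complex.norm_def, Complex.normSq_apply]
  congr 1
  simp only [add_re, add_im, mul_re, mul_im, map_mul, conj_ofReal, conj_re, conj_im,
    ofReal_re, ofReal_im, exp_ofReal_mul_I_re, exp_ofReal_mul_I_im]
  linear_combination (r₀ ^ 2 + s ^ 2 - 2 * r₀ * s) * Real.sin_sq_add_cos_sq θ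

lemma div_div_sqrt_one_add_sq_div {x b : ℝ} (hb : 0 < b) :
    x / b / √(1 + (x / b) ^ 2) = x / √(x ^ 2 + b ^ 2) := by
  rw [show 1 + (x / b) ^ 2 = (x ^ 2 + b ^ 2) / b ^ 2 by field_simp; ring,
    Real.sqrt_div' _ (sq_nonneg b), Real.sqrt_sq hb.le]
  field_simp

lemma rhoH_ofReal_mul_exp {r₀ s θ : ℝ} (hr₀ : 0 < r₀) (hs : 0 < s) (hθ : 0 < Real.cos θ) :
    rhoH ((r₀ : ℂ) * Complex.exp (θ * I)) ((s : ℂ) * Complex.exp (θ * I))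
      = Real.tanh (Real.arsinh (|s - r₀| / (2 * √(r₀ * s)) / Real.cos θ)) := by
  have hnum : ‖(r₀ : ℂ) * Complex.exp (θ * I) - (s : ℂ) * Complex.exp (θ * I)‖ = |s - r₀| := by
    rw [← sub_mul, norm_mul, norm_exp_ofReal_mul_I, mul_one, ← ofReal_sub, norm_real,
      Real.norm_eq_abs, abs_sub_comm]
  have hB : (2 * √(r₀ * s) * Real.cos θ) ^ 2 = 4 * r₀ * s * Real.cos θ ^ 2 := by
    rw [mul_pow, mul_pow, Real.sq_sqrt (by positivity)]; ring
  rw [Real.tanh_arsinh, div_div |s - r₀|, div_div_sqrt_one_add_sq_div (by positivity), sq_abs, hB,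
    rhoH, norm_div, hnum, norm_ofReal_mul_exp_add_conj]

lemma dH_ofReal_mul_exp {r₀ s θ : ℝ} (hr₀ : 0 < r₀) (hs : 0 < s) (hθ : 0 < Real.cos θ) :
    dH ((r₀ : ℂ) * Complex.exp (θ * I)) ((s : ℂ) * Complex.exp (θ * I))
      = Real.arsinh (|s - r₀| / (2 * √(r₀ * s)) / Real.cos θ) :=
  dH_eq_of_rhoH_eq_tanh (rhoH_ofReal_mul_exp hr₀ hs hθ)

lemma dH_ofReal {r₀ s : ℝ} (hr₀ : 0 < r₀) (hs : 0 < s) :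
    dH r₀ s = Real.arsinh (|s - r₀| / (2 * √(r₀ * s))) := by
  simpa using dH_ofReal_mul_exp (θ := 0) hr₀ hs (by simp)

lemma tendsto_arsinh_sub_log_two_mul :
    Tendsto (fun x => Real.arsinh x - Real.log (2 * x)) atTop (𝓝 0) := by
  have hcont : ContinuousAt (fun u : ℝ => Real.log ((1 + √(u ^ 2 + 1)) / 2)) 0 :=
    ContinuousAt.log (by fun_prop) (by norm_num)
  have hlim : Tendsto (fun x : ℝ => Real.log ((1 + √(x⁻¹ ^ 2 + 1)) / 2)) atTop (𝓝 0) := by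
    simpa [Function.comp_def] using hcont.tendsto.comp tendsto_inv_atTop_zero
  refine hlim.congr' ?_
  filter_upwards [eventually_gt_atTop 0] with x hx
  have hsqrt : √(1 + x ^ 2) = x * √(x⁻¹ ^ 2 + 1) := by
    rw [show 1 + x ^ 2 = x ^ 2 * (x⁻¹ ^ 2 + 1) by field_simp,
      Real.sqrt_mul (sq_nonneg x), Real.sqrt_sq hx.le]
  rw [Real.arsinh, ← Real.log_div (by positivity) (by positivity), hsqrt]
  congr 1
  field_simp

lemma tendsto_arsinh_div_sub_arsinh {c : ℝ} (hc : 0 < c) :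
    Tendsto (fun x => Real.arsinh (x / c) - Real.arsinh x) atTop (𝓝 (-Real.log c)) := by
  have hlim := ((tendsto_arsinh_sub_log_two_mul.comp (tendsto_id.atTop_div_const hc)).sub
    tendsto_arsinh_sub_log_two_mul).add_const (-Real.log c)
  rw [sub_zero, zero_add] at hlim
  refine hlim.congr' ?_
  filter_upwards [eventually_gt_atTop 0] with x hx
  rw [Function.comp_apply, id, mul_div_assoc', Real.log_div (by positivity) hc.ne']
  ring

lemma tendsto_abs_sub_div_two_mul_sqrt_mul {r₀ : ℝ} (hr₀ : 0 < r₀) :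
    Tendsto (fun s => |s - r₀| / (2 * √(r₀ * s))) atTop atTop := by
  have hratio : Tendsto (fun s => |s - r₀| / s) atTop (𝓝 1) := by
    have hcont : Continuous (fun u : ℝ => |1 - r₀ * u|) := by fun_prop
    have hlim : Tendsto (fun s : ℝ => |1 - r₀ * s⁻¹|) atTop (𝓝 1) := by
      simpa [Function.comp_def] using (hcont.tendsto 0).comp tendsto_inv_atTop_zero
    refine hlim.congr' ?_
    filter_upwards [eventually_gt_atTop 0] with s hs
    rw [show 1 - r₀ * s⁻¹ = (s - r₀) / s by field_simp, abs_div, abs_of_pos hs]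
  have hsqrt : Tendsto (fun s => √s / (2 * √r₀)) atTop atTop :=
    Real.tendsto_sqrt_atTop.atTop_div_const (by positivity)
  refine (hratio.pos_mul_atTop one_pos hsqrt).congr' ?_
  filter_upwards [eventually_gt_atTop 0] with s hs
  rw [Real.sqrt_mul hr₀.le]
  field_simp
  rw [Real.sq_sqrt hs.le, mul_comm]

theorem stmt11_general (r : ℕ → ℝ) (hrinf : Tendsto r atTop atTop)
    (θ : ℝ) (hθ : θ ∈ Set.Ioo (-(Real.pi/2)) (Real.pi/2))
    (r₀ : ℝ) (hr₀ : 0 < r₀) :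
    Tendsto (fun n : ℕ =>
        dH ((r₀ : ℂ) * Complex.exp ((θ : ℂ) * I)) ((r n : ℂ) * Complex.exp ((θ : ℂ) * I))
          - dH ((r₀ : ℂ)) ((r n : ℂ))) atTop (𝓝 (-Real.log (Real.cos θ))) ∧
    0 ≤ -Real.log (Real.cos θ) := by
  have hcos : 0 < Real.cos θ := Real.cos_pos_of_mem_Ioo hθ
  have hlim := (tendsto_arsinh_div_sub_arsinh hcos).comp
    ((tendsto_abs_sub_div_two_mul_sqrt_mul hr₀).comp hrinf)
  refine ⟨hlim.congr' ?_, neg_nonneg.2 (Real.log_nonpos hcos.le (Real.cos_le_one θ))⟩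
  filter_upwards [hrinf.eventually_gt_atTop 0] with n hn
  rw [Function.comp_apply, Function.comp_apply, dH_ofReal_mul_exp hr₀ hn hcos, dH_ofReal hr₀ hn]

/-- for r_n → ∞ and θ ∈ (−π/2, π/2),
d_ℍ(r₀e^{iθ}, r_n e^{iθ}) − d_ℍ(r₀, r_n) → −log(cos θ) ∈ [0, ∞). -/
theorem stmt11 (r : ℕ → ℝ) (hr : ∀ n, 0 < r n) (hrinf : Tendsto r atTop atTop)
    (θ : ℝ) (hθ : θ ∈ Set.Ioo (-(Real.pi/2)) (Real.pi/2))
    (r₀ : ℝ) (hr₀ : 0 < r₀) :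
    Tendsto (fun n : ℕ =>
        dH ((r₀ : ℂ) * Complex.exp ((θ : ℂ) * I)) ((r n : ℂ) * Complex.exp ((θ : ℂ) * I))
          - dH ((r₀ : ℂ)) ((r n : ℂ))) atTop (𝓝 (-Real.log (Real.cos θ))) ∧
    0 ≤ -Real.log (Real.cos θ) :=
  stmt11_general r hrinf θ hθ r₀ hr₀
end

section
/- Let {p_n} ⊂ ℍ be a sequence with |p_n| → ∞ and {r_n} ⊂ (0,1) a sequence with r_n → 1. If (Re p_n)/((1 − r_n²)·|1 + p_n|²) → λ for some λ ∈ (0, +∞), then the open half-plane {z ∈ ℂ : Re z > 1/(4λ)} is contained in liminf_{n→∞} Δ_ℍ(p_n, r_n); that is, for every z with Re z > 1/(4λ) there exists N such that z ∈ Δ_ℍ(p_n, r_n) for all n ≥ N. -/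
open Complex Filter Topology

/-- The pseudo-hyperbolic disc of ℍ with centre `z` and radius `r`. -/
def DeltaH (z : ℂ) (r : ℝ) : Set ℂ := {w : ℂ | 0 < w.re ∧ rhoH w z < r}

/-! Since `‖z - p‖² = ‖z + p̄‖² - 4 Re z Re p`, the point `z` lies in `Δ_ℍ(p, r)` as soon as
`(1 - r²) ‖z + p̄‖² < 4 Re z Re p`. As `|p_n| → ∞` we have `‖z + p̄_n‖ / ‖1 + p_n‖ → 1`, so this
condition reads `1 < 4 Re z · Re p_n / ((1 - r_n²) ‖1 + p_n‖²)` up to a factor tending to `1`,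
and the right-hand side tends to `4 λ Re z > 1`. -/

open ComplexConjugate

theorem tendsto_norm_add_div_norm_add {α E : Type*} [SeminormedAddCommGroup E] {l : Filter α}
    {q : α → E} (hq : Tendsto (fun x => ‖q x‖) l atTop) (a b : E) :
    Tendsto (fun x => ‖a + q x‖ / ‖b + q x‖) l (𝓝 1) := by
  have hb : Tendsto (fun x => ‖b + q x‖) l atTop := by
    refine tendsto_atTop_mono (fun x => ?_) (tendsto_atTop_add_const_right l (-‖b‖) hq)
    have := norm_sub_le (b + q x) b
    rw [add_sub_cancel_left] at this
    linarith
  rw [tendsto_iff_norm_sub_tendsto_zero]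
  refine squeeze_zero' (Eventually.of_forall fun _ => norm_nonneg _) ?_
    ((tendsto_const_nhds (x := ‖a - b‖)).div_atTop hb)
  filter_upwards [hb.eventually_gt_atTop 0] with x hx
  rw [Real.norm_eq_abs, div_sub_one hx.ne', abs_div, abs_of_pos hx]
  gcongr
  simpa using abs_norm_sub_norm_le (a + q x) (b + q x)

theorem Complex.norm_sub_sq_eq_norm_add_conj_sq_sub (z p : ℂ) :
    ‖z - p‖ ^ 2 = ‖z + conj p‖ ^ 2 - 4 * z.re * p.re := by
  simp only [Complex.sq_norm, normSq_apply, sub_re, sub_im, add_re, add_im, conj_re, conj_im]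
  ring

theorem rhoH_lt_of_one_sub_sq_mul_lt {z p : ℂ} {r : ℝ} (hr : 0 ≤ r)
    (h : (1 - r ^ 2) * ‖z + conj p‖ ^ 2 < 4 * z.re * p.re) : rhoH z p < r := by
  have hpos : 0 < ‖z + conj p‖ := by
    refine norm_pos_iff.2 fun h0 => ?_
    have hre : p.re = -z.re := by linarith [show z.re + p.re = 0 by simpa using congrArg re h0]
    rw [h0, norm_zero, hre] at h
    nlinarith [sq_nonneg z.re]
  refine lt_of_pow_lt_pow_left₀ 2 hr ?_
  rw [rhoH, norm_div, div_pow, div_lt_iff₀ (by positivity), norm_sub_sq_eq_norm_add_conj_sq_sub]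
  linarith

theorem mul_sq_lt_of_div_sq_lt_mul_div {s a b c k : ℝ} (hs : 0 ≤ s) (hpos : 0 < c / (s * b ^ 2))
    (h : (a / b) ^ 2 < k * (c / (s * b ^ 2))) : s * a ^ 2 < k * c := by
  have hD : 0 < s * b ^ 2 :=
    lt_of_le_of_ne (by positivity) fun h0 => by rw [← h0, div_zero] at hpos; exact hpos.false
  have hs0 : s ≠ 0 := by rintro rfl; simp at hD
  have hb : b ≠ 0 := by rintro rfl; simp at hD
  calc s * a ^ 2 = (a / b) ^ 2 * (s * b ^ 2) := by field_simp
    _ < k * (c / (s * b ^ 2)) * (s * b ^ 2) := mul_lt_mul_of_pos_right h hD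
    _ = k * c := by field_simp

theorem stmt12_general (p : ℕ → ℂ)
    (hpinf : Tendsto (fun n : ℕ => ‖p n‖) atTop atTop)
    (r : ℕ → ℝ) (hr : ∀ n, r n ∈ Set.Ioo (0:ℝ) 1)
    (lam : ℝ) (hlam : 0 < lam)
    (hlim : Tendsto (fun n : ℕ =>
        (p n).re / ((1 - (r n)^2) * (‖1 + p n‖)^2)) atTop (𝓝 lam)) :
    ∀ z : ℂ, 1/(4*lam) < z.re → ∃ N : ℕ, ∀ n ≥ N, z ∈ DeltaH (p n) (r n) := by
  intro z hz
  have hz0 : 0 < z.re := lt_trans (by positivity) hz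
  have hmargin : 1 < 4 * z.re * lam := by
    rw [div_lt_iff₀ (by positivity)] at hz
    linarith
  have hratio : Tendsto (fun n => (‖z + conj (p n)‖ / ‖1 + p n‖) ^ 2) atTop (𝓝 1) := by
    have hconj (n : ℕ) : ‖1 + conj (p n)‖ = ‖1 + p n‖ := by
      rw [← norm_conj, map_add, map_one, conj_conj]
    simpa only [hconj, one_pow] using (tendsto_norm_add_div_norm_add
      (q := fun n => conj (p n)) (by simpa only [norm_conj] using hpinf) z 1).pow 2
  obtain ⟨N, hN⟩ := eventually_atTop.1
    ((hratio.eventually_lt (hlim.const_mul (4 * z.re)) hmargin).and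
      (hlim.eventually_const_lt hlam))
  refine ⟨N, fun n hn => ⟨hz0, rhoH_lt_of_one_sub_sq_mul_lt (hr n).1.le ?_⟩⟩
  obtain ⟨hlt, hpos⟩ := hN n hn
  obtain ⟨hr0, hr1⟩ := hr n
  exact mul_sq_lt_of_div_sq_lt_mul_div (by nlinarith) hpos hlt

/-- disc convergence lemma: if Re p_n / ((1 − r_n²)|1 + p_n|²) → λ > 0,
then the half-plane {Re z > 1/(4λ)} is contained in liminf Δ_ℍ(p_n, r_n). -/
theorem stmt12 (p : ℕ → ℂ) (hp : ∀ n, 0 < (p n).re)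
    (hpinf : Tendsto (fun n : ℕ => ‖p n‖) atTop atTop)
    (r : ℕ → ℝ) (hr : ∀ n, r n ∈ Set.Ioo (0:ℝ) 1)
    (hrlim : Tendsto r atTop (𝓝 1))
    (lam : ℝ) (hlam : 0 < lam)
    (hlim : Tendsto (fun n : ℕ =>
        (p n).re / ((1 - (r n)^2) * (‖1 + p n‖)^2)) atTop (𝓝 lam)) :
    ∀ z : ℂ, 1/(4*lam) < z.re → ∃ N : ℕ, ∀ n ≥ N, z ∈ DeltaH (p n) (r n) :=
  stmt12_general p hpinf r hr lam hlam hlim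
end
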